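/- arXiv:1704.08356 — 2 statements merged into one kernel-verified Lean document; each statement's English description precedes it below -/
import Mathlib

section
/- (Spurious-edge entry of the inverse power spectral density) Suppose i ≠ j and b i j = 0. Then (Φ⁻¹) j i = Σ_{k} b k j · b k i / (d k · |S k|²), which is a nonnegative real number; moreover, if there exists k with b k i > 0 and b k j > 0, then (Φ⁻¹) j i is a strictly positive real number. -/
open Matrix Complex

/-- The characteristic polynomial term `S_j(z)` of the discretized swing equation,
evaluated at `z = e^{iω}`. -/
noncomputable def gridS (N : ℕ) (ω : ℝ) (b : Fin N → Fin N → ℝ) (ts : ℝ)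
    (M D : Fin N → ℝ) (j : Fin N) : ℂ :=
  ((M j / ts ^ 2 : ℝ) : ℂ) * (Complex.exp (Complex.I * ω) - 1) ^ 2 +
    ((D j / ts : ℝ) : ℂ) * (Complex.exp (Complex.I * ω) - 1) + ((∑ i, b i j : ℝ) : ℂ)

/-- The transfer-function matrix `H` of the swing-equation linear dynamic graph:
`H j i = b j i / S j` for `i ≠ j`, `H j j = 0`. -/
noncomputable def gridH (N : ℕ) (ω : ℝ) (b : Fin N → Fin N → ℝ) (ts : ℝ)
    (M D : Fin N → ℝ) : Matrix (Fin N) (Fin N) ℂ :=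
  Matrix.of fun j i => if i = j then 0 else ((b j i : ℝ) : ℂ) / gridS N ω b ts M D j

/-- The power spectral density matrix `Φ = (I − H)⁻¹ diag(d) ((I − H)⁻¹)ᴴ`. -/
noncomputable def gridPhi (N : ℕ) (ω : ℝ) (b : Fin N → Fin N → ℝ) (ts : ℝ)
    (M D : Fin N → ℝ) (d : Fin N → ℝ) : Matrix (Fin N) (Fin N) ℂ :=
  (1 - gridH N ω b ts M D)⁻¹ * Matrix.diagonal (fun k => ((d k : ℝ) : ℂ)) *
    ((1 - gridH N ω b ts M D)⁻¹)ᴴ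

/-
Inverting `Φ = A⁻¹ diag(d) A⁻¹ᴴ` with `A = I − H` gives `Φ⁻¹ = Aᴴ diag(d)⁻¹ A`. Expanding
`(I − H)ᴴ E (I − H) = E − Hᴴ E − E H + Hᴴ E H`, an off-diagonal entry `(j, i)` is
`Σ_k conj(H k j) H k i / d k − conj(H i j) / d i − H j i / d j`, and the last two terms vanish
when `b i j = 0`. Since `b` is real, `conj(H k j) H k i = b k j b k i / |S k|²`.
-/

namespace Matrix

variable {n K : Type*} [Fintype n] [DecidableEq n]

theorem inv_diagonal_of_ne_zero [Field K] {v : n → K} (hv : ∀ k, v k ≠ 0) :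
    (diagonal v)⁻¹ = diagonal v⁻¹ :=
  inv_eq_right_inv <| by
    rw [diagonal_mul_diagonal, ← diagonal_one]
    exact congrArg diagonal (funext fun k => mul_inv_cancel₀ (hv k))

theorem inv_mul_mul_conjTranspose_inv_inv [CommRing K] [StarRing K] {A E : Matrix n n K}
    (hA : IsUnit A) : (A⁻¹ * E * A⁻¹ᴴ)⁻¹ = Aᴴ * E⁻¹ * A := by
  have hdet : IsUnit A.det := (isUnit_iff_isUnit_det A).mp hA
  have hdetH : IsUnit Aᴴ.det := by
    rw [det_conjTranspose]
    exact hdet.star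
  rw [conjTranspose_nonsing_inv, mul_inv_rev, mul_inv_rev, nonsing_inv_nonsing_inv _ hdetH,
    nonsing_inv_nonsing_inv _ hdet, mul_assoc]

theorem conjTranspose_one_sub_mul_diagonal_mul_one_sub_apply_of_ne [CommRing K] [StarRing K]
    (H : Matrix n n K) (e : n → K) {i j : n} (hij : i ≠ j) :
    ((1 - H)ᴴ * diagonal e * (1 - H) : Matrix n n K) j i =
      ∑ k, star (H k j) * e k * H k i - star (H i j) * e i - e j * H j i := by
  have hexpand : (1 - H)ᴴ * diagonal e * (1 - H) =
      diagonal e - Hᴴ * diagonal e - diagonal e * H + Hᴴ * diagonal e * H := by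
    simp only [conjTranspose_sub, conjTranspose_one, sub_mul, mul_sub, one_mul, mul_one]
    abel
  rw [hexpand, add_apply, sub_apply, sub_apply, diagonal_apply_ne _ hij.symm, mul_diagonal, diagonal_mul,
    mul_apply]
  simp only [mul_diagonal, conjTranspose_apply]
  ring

end Matrix

theorem star_ofReal_div_mul_inv_mul_ofReal_div (x y c : ℝ) (s : ℂ) :
    star ((x : ℂ) / s) * (c : ℂ)⁻¹ * ((y : ℂ) / s) = ((x * y / (c * ‖s‖ ^ 2) : ℝ) : ℂ) := by
  rw [star_div₀, Complex.star_def, Complex.conj_ofReal]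
  push_cast
  rw [← Complex.mul_conj']
  simp only [div_eq_mul_inv, mul_inv]
  ring

theorem gridH_apply_of_hollow {N : ℕ} {ω : ℝ} {b : Fin N → Fin N → ℝ} {ts : ℝ} {M D : Fin N → ℝ}
    (hhollow : ∀ i, b i i = 0) (j i : Fin N) :
    gridH N ω b ts M D j i = (b j i : ℂ) / gridS N ω b ts M D j := by
  by_cases hij : i = j
  · subst hij
    simp [gridH, hhollow]
  · simp [gridH, hij]

theorem inv_psd_spurious_edge_entry_general
    (N : ℕ) (ω : ℝ) (b : Fin N → Fin N → ℝ)
    (hsym : ∀ i j, b i j = b j i) (hnonneg : ∀ i j, 0 ≤ b i j)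
    (hhollow : ∀ i, b i i = 0)
    (ts : ℝ) (M D : Fin N → ℝ)
    (hS : ∀ j, gridS N ω b ts M D j ≠ 0)
    (d : Fin N → ℝ) (hd : ∀ j, 0 < d j)
    (hinv : IsUnit (1 - gridH N ω b ts M D))
    (i j : Fin N) (hij : i ≠ j) (hbij : b i j = 0) :
    ((gridPhi N ω b ts M D d)⁻¹) j i =
        ((∑ k, b k j * b k i / (d k * ‖gridS N ω b ts M D k‖ ^ 2) : ℝ) : ℂ) ∧
      0 ≤ (((gridPhi N ω b ts M D d)⁻¹) j i).re ∧
      (((gridPhi N ω b ts M D d)⁻¹) j i).im = 0 ∧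
      ((∃ k, 0 < b k i ∧ 0 < b k j) → 0 < (((gridPhi N ω b ts M D d)⁻¹) j i).re) := by
  have hentry : ((gridPhi N ω b ts M D d)⁻¹) j i =
      ((∑ k, b k j * b k i / (d k * ‖gridS N ω b ts M D k‖ ^ 2) : ℝ) : ℂ) := by
    rw [gridPhi, inv_mul_mul_conjTranspose_inv_inv hinv,
      inv_diagonal_of_ne_zero fun k => Complex.ofReal_ne_zero.mpr (hd k).ne',
      conjTranspose_one_sub_mul_diagonal_mul_one_sub_apply_of_ne _ _ hij,
      gridH_apply_of_hollow hhollow i j, gridH_apply_of_hollow hhollow j i, hbij, hsym j i, hbij]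
    simp only [gridH_apply_of_hollow hhollow, Pi.inv_apply, star_ofReal_div_mul_inv_mul_ofReal_div,
      Complex.ofReal_zero, zero_div, mul_zero, star_zero, zero_mul, sub_zero, Complex.ofReal_sum]
  have hterm_nonneg : ∀ k, 0 ≤ b k j * b k i / (d k * ‖gridS N ω b ts M D k‖ ^ 2) := fun k =>
    div_nonneg (mul_nonneg (hnonneg k j) (hnonneg k i)) (by have := hd k; positivity)
  refine ⟨hentry, ?_, ?_, ?_⟩
  · rw [hentry, Complex.ofReal_re]
    exact Finset.sum_nonneg fun k _ => hterm_nonneg k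
  · rw [hentry, Complex.ofReal_im]
  · rintro ⟨k, hki, hkj⟩
    rw [hentry, Complex.ofReal_re]
    refine Finset.sum_pos' (fun l _ => hterm_nonneg l) ⟨k, Finset.mem_univ k, ?_⟩
    have hSk := norm_pos_iff.mpr (hS k)
    have hdk := hd k
    positivity

/-- **Spurious-edge entry of the inverse power spectral density**: if `i ≠ j` and
`b i j = 0`, then `(Φ⁻¹) j i = Σ_k b k j · b k i / (d k · |S k|²)`, a nonnegative real
number, which is strictly positive whenever `i` and `j` have a common neighbor `k`. -/
theorem inv_psd_spurious_edge_entry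
    (N : ℕ) (hN : 1 ≤ N) (ω : ℝ) (b : Fin N → Fin N → ℝ)
    (hsym : ∀ i j, b i j = b j i) (hnonneg : ∀ i j, 0 ≤ b i j)
    (hhollow : ∀ i, b i i = 0)
    (ts : ℝ) (hts : 0 < ts) (M D : Fin N → ℝ)
    (hS : ∀ j, gridS N ω b ts M D j ≠ 0)
    (d : Fin N → ℝ) (hd : ∀ j, 0 < d j)
    (hinv : IsUnit (1 - gridH N ω b ts M D))
    (i j : Fin N) (hij : i ≠ j) (hbij : b i j = 0) :
    ((gridPhi N ω b ts M D d)⁻¹) j i =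
        ((∑ k, b k j * b k i / (d k * ‖gridS N ω b ts M D k‖ ^ 2) : ℝ) : ℂ) ∧
      0 ≤ (((gridPhi N ω b ts M D d)⁻¹) j i).re ∧
      (((gridPhi N ω b ts M D d)⁻¹) j i).im = 0 ∧
      ((∃ k, 0 < b k i ∧ 0 < b k j) → 0 < (((gridPhi N ω b ts M D d)⁻¹) j i).re) :=
  inv_psd_spurious_edge_entry_general N ω b hsym hnonneg hhollow ts M D hS d hd hinv i j hij hbij
end

section
/- (Vanishing of off-diagonal precision entries outside the moral graph, general hollow form) Let H be an N×N complex matrix with zero diagonal (H j j = 0 for all j) such that I − H is invertible, let d : Fin N → ℝ with d k > 0 for all k, and set Φ = (I − H)⁻¹ · diag(d) · ((I − H)⁻¹)ᴴ. If i ≠ j, H j i = 0, H i j = 0, and there is no index k with H k j ≠ 0 and H k i ≠ 0, then (Φ⁻¹) j i = 0. -/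
/-! Inverting `Φ = (I - H)⁻¹ D ((I - H)⁻¹)ᴴ` factor by factor gives the precision matrix
`Φ⁻¹ = (I - H)ᴴ D⁻¹ (I - H)`, whose `(j, i)` entry is `∑ k, conj (I - H)ₖⱼ · dₖ⁻¹ · (I - H)ₖᵢ`.
Column `j` of `I - H` is supported on `j` and the children of `j`, column `i` on `i` and the
children of `i`; when `i` and `j` are not joined in the moral graph these supports are disjoint,
so every summand vanishes. -/

open Matrix

namespace Matrix

variable {n R : Type*} [Fintype n] [DecidableEq n] [CommRing R] [StarRing R]

theorem inv_inv_mul_mul_conjTranspose_inv {A : Matrix n n R} (hA : IsUnit A) (D : Matrix n n R) :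
    (A⁻¹ * D * A⁻¹ᴴ)⁻¹ = Aᴴ * D⁻¹ * A := by
  have hA' : A⁻¹⁻¹ = A := nonsing_inv_nonsing_inv A ((isUnit_iff_isUnit_det A).mp hA)
  rw [mul_inv_rev, mul_inv_rev, ← conjTranspose_nonsing_inv, hA', mul_assoc]

theorem conjTranspose_mul_diagonal_mul_apply (B : Matrix n n R) (v : n → R) (j i : n) :
    (Bᴴ * diagonal v * B) j i = ∑ k, star (B k j) * v k * B k i := by
  simp only [mul_apply (M := Bᴴ * diagonal v), mul_diagonal, conjTranspose_apply]

theorem conjTranspose_mul_diagonal_mul_apply_eq_zero {B : Matrix n n R} (v : n → R) {j i : n}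
    (hB : ∀ k, B k j = 0 ∨ B k i = 0) : (Bᴴ * diagonal v * B) j i = 0 := by
  rw [conjTranspose_mul_diagonal_mul_apply]
  refine Finset.sum_eq_zero fun k _ => ?_
  rcases hB k with hkj | hki
  · simp [hkj]
  · simp [hki]

end Matrix

theorem one_sub_apply_eq_zero_or {n R : Type*} [DecidableEq n] [Ring R] {H : Matrix n n R}
    {i j : n} (hij : i ≠ j) (hji : H j i = 0) (hijz : H i j = 0)
    (hk : ¬ ∃ k, H k j ≠ 0 ∧ H k i ≠ 0) (k : n) :
    (1 - H) k j = 0 ∨ (1 - H) k i = 0 := by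
  by_cases hkj : k = j
  · subst hkj
    simp [one_apply_ne hij.symm, hji]
  by_cases hki : k = i
  · subst hki
    simp [one_apply_ne hij, hijz]
  push Not at hk
  simp only [Matrix.sub_apply, one_apply_ne hkj, one_apply_ne hki, zero_sub, neg_eq_zero]
  exact (em (H k j = 0)).imp id (hk k ·)

theorem precision_vanishes_outside_moral_graph_general
    (N : ℕ) (H : Matrix (Fin N) (Fin N) ℂ)
    (hinv : IsUnit (1 - H))
    (d : Fin N → ℝ)
    (i j : Fin N) (hij : i ≠ j) (hji : H j i = 0) (hijz : H i j = 0)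
    (hk : ¬ ∃ k, H k j ≠ 0 ∧ H k i ≠ 0) :
    ((((1 - H)⁻¹ * Matrix.diagonal (fun k => ((d k : ℝ) : ℂ)) * ((1 - H)⁻¹)ᴴ)⁻¹ :
        Matrix (Fin N) (Fin N) ℂ)) j i = 0 := by
  rw [inv_inv_mul_mul_conjTranspose_inv hinv, inv_diagonal]
  exact conjTranspose_mul_diagonal_mul_apply_eq_zero _ (one_sub_apply_eq_zero_or hij hji hijz hk)

/-- **Vanishing of off-diagonal precision entries outside the moral graph** (general
hollow form): for `H` with zero diagonal, `I − H` invertible,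
`Φ = (I − H)⁻¹ diag(d) ((I − H)⁻¹)ᴴ`, if `i ≠ j`, `H j i = 0`, `H i j = 0`, and no `k`
has both `H k j ≠ 0` and `H k i ≠ 0`, then `(Φ⁻¹) j i = 0`. -/
theorem precision_vanishes_outside_moral_graph
    (N : ℕ) (hN : 1 ≤ N) (H : Matrix (Fin N) (Fin N) ℂ)
    (hhollow : ∀ j, H j j = 0) (hinv : IsUnit (1 - H))
    (d : Fin N → ℝ) (hd : ∀ k, 0 < d k)
    (i j : Fin N) (hij : i ≠ j) (hji : H j i = 0) (hijz : H i j = 0)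
    (hk : ¬ ∃ k, H k j ≠ 0 ∧ H k i ≠ 0) :
    ((((1 - H)⁻¹ * Matrix.diagonal (fun k => ((d k : ℝ) : ℂ)) * ((1 - H)⁻¹)ᴴ)⁻¹ :
        Matrix (Fin N) (Fin N) ℂ)) j i = 0 :=
  precision_vanishes_outside_moral_graph_general N H hinv d i j hij hji hijz hk
end
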